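/- arXiv:2007.08934 — 4 statements merged into one kernel-verified Lean document; each statement's English description precedes it below -/
import Mathlib

section
/- Let E be a real inner product space, let U be a finite-dimensional subspace of E, let φ ∈ E with φ ≠ 0, and let x ∈ E. Let u be the orthogonal projection of x onto U and let w be the orthogonal projection of x onto the subspace U + span{φ} generated by U and φ. Then ‖x − w‖² ≤ ‖x − u‖² − ⟨x − u, φ⟩² / ‖φ‖². -/
open scoped RealInnerProductSpace

/-!
The residual `x - w` is orthogonal to `U ⊔ ℝ ∙ φ`, so by Pythagoras `w` is at least as close to
`x` as any competitor in that space. Compare with `u + α • φ`, `α = ⟪x - u, φ⟫ / ‖φ‖²`: expanding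
the square, this choice of `α` lowers `‖x - u‖²` by exactly `⟪x - u, φ⟫² / ‖φ‖²`.
-/

section

variable {E : Type*} [NormedAddCommGroup E] [InnerProductSpace ℝ E]

theorem norm_sub_sq_le_of_forall_inner_eq_zero {K : Submodule ℝ E} {x w v : E}
    (hwK : w ∈ K) (hw : ∀ y ∈ K, ⟪x - w, y⟫ = 0) (hvK : v ∈ K) :
    ‖x - w‖ ^ 2 ≤ ‖x - v‖ ^ 2 := by
  have hpyth : ‖x - v‖ ^ 2 = ‖x - w‖ ^ 2 + ‖w - v‖ ^ 2 := by
    rw [← sub_add_sub_cancel x w v, norm_add_sq_real, hw _ (K.sub_mem hwK hvK)]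
    ring
  nlinarith [sq_nonneg ‖w - v‖]

theorem norm_sub_inner_div_smul_sq (r φ : E) :
    ‖r - (⟪r, φ⟫ / ‖φ‖ ^ 2) • φ‖ ^ 2 = ‖r‖ ^ 2 - ⟪r, φ⟫ ^ 2 / ‖φ‖ ^ 2 := by
  rw [norm_sub_sq_real, real_inner_smul_right, norm_smul, mul_pow, Real.norm_eq_abs, sq_abs]
  rcases eq_or_ne ‖φ‖ 0 with hφ | hφ
  · simp [hφ]
  · field_simp
    ring

end

theorem stmt_3_general {E : Type*} [NormedAddCommGroup E] [InnerProductSpace ℝ E]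
    (U : Submodule ℝ E)
    (φ : E) (x u w : E)
    (huU : u ∈ U)
    (hwW : w ∈ U ⊔ (ℝ ∙ φ)) (hw : ∀ y ∈ U ⊔ (ℝ ∙ φ), ⟪x - w, y⟫ = 0) :
    ‖x - w‖ ^ 2 ≤ ‖x - u‖ ^ 2 - ⟪x - u, φ⟫ ^ 2 / ‖φ‖ ^ 2 := by
  set α : ℝ := ⟪x - u, φ⟫ / ‖φ‖ ^ 2
  have hvW : u + α • φ ∈ U ⊔ (ℝ ∙ φ) :=
    Submodule.add_mem_sup huU (Submodule.smul_mem _ α (Submodule.mem_span_singleton_self φ))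
  calc ‖x - w‖ ^ 2 ≤ ‖x - (u + α • φ)‖ ^ 2 := norm_sub_sq_le_of_forall_inner_eq_zero hwW hw hvW
    _ = ‖x - u‖ ^ 2 - ⟪x - u, φ⟫ ^ 2 / ‖φ‖ ^ 2 := by
      rw [← sub_sub, norm_sub_inner_div_smul_sq]

/-- Error reduction when one basis function `φ ≠ 0` is added to a
finite-dimensional subspace `U` of a real inner product space: with `u` the
orthogonal projection of `x` onto `U` and `w` the orthogonal projection of `x`
onto `U + span{φ}` (each characterized by membership and orthogonality of the
residual), one has `‖x − w‖² ≤ ‖x − u‖² − ⟪x − u, φ⟫² / ‖φ‖²`. -/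
theorem stmt_3 {E : Type*} [NormedAddCommGroup E] [InnerProductSpace ℝ E]
    (U : Submodule ℝ E) [FiniteDimensional ℝ U]
    (φ : E) (hφ : φ ≠ 0) (x u w : E)
    (huU : u ∈ U) (hu : ∀ y ∈ U, ⟪x - u, y⟫ = 0)
    (hwW : w ∈ U ⊔ (ℝ ∙ φ)) (hw : ∀ y ∈ U ⊔ (ℝ ∙ φ), ⟪x - w, y⟫ = 0) :
    ‖x - w‖ ^ 2 ≤ ‖x - u‖ ^ 2 - ⟪x - u, φ⟫ ^ 2 / ‖φ‖ ^ 2 :=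
  stmt_3_general U φ x u w huU hwW hw
end

section
/- Let N be a natural number, let I be a subset of Fin N, let s, s', b : Fin N → ℝ be nonnegative, let θ, δ ∈ (0,1) and α > 0 be real numbers. Assume θ · ∑_{i} (s i)² ≤ ∑_{i ∈ I} (s i)², that s' i ≤ √δ · s i + b i for every i ∈ I, and that s' i ≤ s i + b i for every i ∉ I. Then ∑_{i} (s' i)² ≤ (1 + α)·(1 − (1 − δ)·θ)·∑_{i} (s i)² + (1 + α⁻¹)·∑_{i} (b i)². -/
/-
Square the two one-step bounds and split each with Young's inequality
`(x + y)² ≤ (1 + α) x² + (1 + α⁻¹) y²`. The `s`-parts then carry the weight `δ` on `I` and `1`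
off `I`, so their sum is `∑ s² - (1 - δ) ∑_{i ∈ I} s²`, and Dörfler marking bounds the
subtracted term from below by `(1 - δ) θ ∑ s²`.
-/

open Finset

theorem add_sq_le_one_add_mul_sq_add_one_add_inv_mul_sq {α : ℝ} (hα : 0 < α) (x y : ℝ) :
    (x + y) ^ 2 ≤ (1 + α) * x ^ 2 + (1 + α⁻¹) * y ^ 2 := by
  have h : 0 ≤ (α * x - y) ^ 2 / α := by positivity
  have expand : (α * x - y) ^ 2 / α = α * x ^ 2 - 2 * x * y + α⁻¹ * y ^ 2 := by
    field_simp
    ring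
  linarith

theorem sq_le_one_add_mul_sq_add_one_add_inv_mul_sq {α x y z : ℝ} (hα : 0 < α) (hx : 0 ≤ x)
    (hxyz : x ≤ y + z) : x ^ 2 ≤ (1 + α) * y ^ 2 + (1 + α⁻¹) * z ^ 2 :=
  (pow_le_pow_left₀ hx hxyz 2).trans (add_sq_le_one_add_mul_sq_add_one_add_inv_mul_sq hα y z)

theorem sum_ite_mem_mul_le_of_mul_sum_le {ι : Type*} [Fintype ι] [DecidableEq ι]
    {I : Finset ι} {f : ι → ℝ} {θ δ : ℝ} (hδ : δ ≤ 1)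
    (hmark : θ * ∑ i, f i ≤ ∑ i ∈ I, f i) :
    ∑ i, (if i ∈ I then δ else 1) * f i ≤ (1 - (1 - δ) * θ) * ∑ i, f i := by
  have split : ∑ i, (if i ∈ I then δ else 1) * f i = ∑ i, f i - (1 - δ) * ∑ i ∈ I, f i := by
    rw [← Fintype.sum_ite_mem I f, mul_sum, ← sum_sub_distrib]
    refine sum_congr rfl fun i _ => ?_
    split_ifs <;> ring
  rw [split]
  linear_combination mul_le_mul_of_nonneg_left hmark (sub_nonneg.mpr hδ)

theorem stmt_9_general (N : ℕ) (I : Finset (Fin N)) (s s' b : Fin N → ℝ)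
    (hs' : ∀ i, 0 ≤ s' i)
    (θ δ α : ℝ) (hδ0 : 0 < δ) (hδ1 : δ < 1)
    (hα : 0 < α)
    (hmark : θ * ∑ i, (s i) ^ 2 ≤ ∑ i ∈ I, (s i) ^ 2)
    (hin : ∀ i ∈ I, s' i ≤ Real.sqrt δ * s i + b i)
    (hout : ∀ i ∉ I, s' i ≤ s i + b i) :
    ∑ i, (s' i) ^ 2
      ≤ (1 + α) * (1 - (1 - δ) * θ) * ∑ i, (s i) ^ 2
        + (1 + α⁻¹) * ∑ i, (b i) ^ 2 := by
  have step : ∀ i, s' i ^ 2 ≤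
      (1 + α) * ((if i ∈ I then δ else 1) * s i ^ 2) + (1 + α⁻¹) * b i ^ 2 := by
    intro i
    split_ifs with hi
    · rw [← Real.sq_sqrt hδ0.le, ← mul_pow]
      exact sq_le_one_add_mul_sq_add_one_add_inv_mul_sq hα (hs' i) (hin i hi)
    · rw [one_mul]
      exact sq_le_one_add_mul_sq_add_one_add_inv_mul_sq hα (hs' i) (hout i hi)
  calc ∑ i, s' i ^ 2
      ≤ (1 + α) * ∑ i, (if i ∈ I then δ else 1) * s i ^ 2 + (1 + α⁻¹) * ∑ i, b i ^ 2 := by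
        rw [mul_sum, mul_sum, ← sum_add_distrib]
        exact sum_le_sum fun i _ => step i
    _ ≤ (1 + α) * ((1 - (1 - δ) * θ) * ∑ i, s i ^ 2) + (1 + α⁻¹) * ∑ i, b i ^ 2 := by
        gcongr
        exact sum_ite_mem_mul_le_of_mul_sum_le hδ1.le hmark
    _ = _ := by ring

/-- Combination step in the proof of Theorem 3.1: with Dörfler marking
`θ ∑ (s i)² ≤ ∑_{i ∈ I} (s i)²`, contraction `s' i ≤ √δ s i + b i` on marked
elements and `s' i ≤ s i + b i` elsewhere, Young's inequality yields
`∑ (s' i)² ≤ (1+α)(1−(1−δ)θ) ∑ (s i)² + (1+α⁻¹) ∑ (b i)²`. -/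
theorem stmt_9 (N : ℕ) (I : Finset (Fin N)) (s s' b : Fin N → ℝ)
    (hs : ∀ i, 0 ≤ s i) (hs' : ∀ i, 0 ≤ s' i) (hb : ∀ i, 0 ≤ b i)
    (θ δ α : ℝ) (hθ0 : 0 < θ) (hθ1 : θ < 1) (hδ0 : 0 < δ) (hδ1 : δ < 1)
    (hα : 0 < α)
    (hmark : θ * ∑ i, (s i) ^ 2 ≤ ∑ i ∈ I, (s i) ^ 2)
    (hin : ∀ i ∈ I, s' i ≤ Real.sqrt δ * s i + b i)
    (hout : ∀ i ∉ I, s' i ≤ s i + b i) :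
    ∑ i, (s' i) ^ 2
      ≤ (1 + α) * (1 - (1 - δ) * θ) * ∑ i, (s i) ^ 2
        + (1 + α⁻¹) * ∑ i, (b i) ^ 2 :=
  stmt_9_general N I s s' b hs' θ δ α hδ0 hδ1 hα hmark hin hout
end

section
/- Let C ≥ 1, θ ∈ (0,1), ρ ∈ (0,1) and ε be real numbers with 0 < ε < 1 − ρ. Let L : ℕ → ℝ be a nonincreasing sequence with L m ≥ 0 for all m and L 1 ≥ 1, and let τ be a real number with 0 < τ ≤ (1 − ρ − ε)/(ρ · L 1). Let e, σ, d : ℕ → ℝ be nonnegative sequences such that for every m ≥ 1: (i) (e m)² = d m + (e (m+1))²; (ii) σ (m+1) ≤ ρ · σ m + L (m+1) · d m; and (iii) (e m)² ≤ (C/θ) · σ m. Set ε_off = 1 − ε·θ·τ/(2·C·(1 + τ·L 1)). Then 0 < ε_off < 1 and for every m ≥ 1, (e (m+1))² + (τ/(1 + τ·L (m+1)))·σ (m+1) ≤ ε_off · ((e m)² + (τ/(1 + τ·L m))·σ m). -/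
/-!
Write `a m = τ / (1 + τ L m)`. Orthogonality lowers the energy error by `d m`, and since
`a (m+1) · L (m+1) ≤ 1` this pays for the growth `L (m+1) · d m` of the residual.
The choice of `τ` makes `ρ · a (m+1) ≤ (1 - ε) · a m`, so one step costs at most
`e m ² + (1 - ε) a m σ m`. Reliability then converts a fraction of the gained `ε a m σ m`
into a decrease of `e m ²`, which is where the rate comes from.
-/

namespace OfflineEnrichment

noncomputable def weight (τ l : ℝ) : ℝ := τ / (1 + τ * l)

noncomputable def rate (C θ ε τ K : ℝ) : ℝ := ε * θ * τ / (2 * C * (1 + τ * K))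

section Weight

variable {τ l : ℝ}

lemma one_add_mul_pos (hτ : 0 ≤ τ) (hl : 0 ≤ l) : 0 < 1 + τ * l := by positivity

lemma weight_nonneg (hτ : 0 ≤ τ) (hl : 0 ≤ l) : 0 ≤ weight τ l := by
  unfold weight; positivity

lemma weight_le_self (hτ : 0 ≤ τ) (hl : 0 ≤ l) : weight τ l ≤ τ :=
  div_le_self hτ (le_add_of_nonneg_right (mul_nonneg hτ hl))

lemma weight_antitone (hτ : 0 ≤ τ) (hl : 0 ≤ l) {l' : ℝ} (hll' : l ≤ l') :
    weight τ l' ≤ weight τ l :=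
  div_le_div_of_nonneg_left hτ (one_add_mul_pos hτ hl) (by gcongr)

lemma weight_mul_le_one (hτ : 0 ≤ τ) (hl : 0 ≤ l) : weight τ l * l ≤ 1 := by
  rw [weight, div_mul_eq_mul_div, div_le_one (one_add_mul_pos hτ hl)]
  linarith

lemma mul_le_one_sub_mul_weight {ρ ε : ℝ} (hτ : 0 ≤ τ) (hl : 0 ≤ l)
    (hτρ : τ * (ρ * l) ≤ 1 - ρ - ε) : ρ * τ ≤ (1 - ε) * weight τ l := by
  rw [weight, mul_div_assoc', le_div_iff₀ (one_add_mul_pos hτ hl)]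
  nlinarith

end Weight

section Rate

variable {C θ ε τ K : ℝ}

lemma rate_pos (hC : 0 < C) (hθ : 0 < θ) (hε : 0 < ε) (hτ : 0 < τ) (hK : 0 ≤ K) :
    0 < rate C θ ε τ K := by
  unfold rate; positivity

lemma rate_le_half (hC : 1 ≤ C) (hθ1 : θ ≤ 1) (hε : 0 ≤ ε) (hτ : 0 ≤ τ)
    (hK : 1 ≤ K) : rate C θ ε τ K ≤ ε / 2 := by
  have hθτ : θ * τ ≤ C * (1 + τ * K) := by
    nlinarith [mul_le_mul hC hK zero_le_one (by linarith), mul_le_mul_of_nonneg_right hθ1 hτ]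
  rw [rate, div_le_div_iff₀ (by positivity) two_pos]
  nlinarith [mul_le_mul_of_nonneg_left hθτ hε]

lemma rate_mul_div (hC : 0 < C) (hθ : 0 < θ) (hτ : 0 ≤ τ) (hK : 0 ≤ K) :
    rate C θ ε τ K * (C / θ) = ε / 2 * weight τ K := by
  have := one_add_mul_pos hτ hK
  unfold rate weight
  field_simp

lemma rate_mul_le_of_reliable (hC : 1 ≤ C) (hθ0 : 0 < θ) (hθ1 : θ ≤ 1) (hε : 0 ≤ ε)
    (hτ : 0 ≤ τ) (hK : 1 ≤ K) {x s a : ℝ} (hs : 0 ≤ s) (ha : weight τ K ≤ a)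
    (hrel : x ≤ C / θ * s) : rate C θ ε τ K * x ≤ (ε - rate C θ ε τ K) * a * s := by
  have hK0 : 0 ≤ K := zero_le_one.trans hK
  have hhalf := rate_le_half hC hθ1 hε hτ hK
  have hC0 : 0 < C := one_pos.trans_le hC
  have hδ0 : 0 ≤ rate C θ ε τ K := by unfold rate; positivity
  calc rate C θ ε τ K * x ≤ rate C θ ε τ K * (C / θ) * s := by
        rw [mul_assoc]; gcongr
    _ = ε / 2 * weight τ K * s := by rw [rate_mul_div hC0 hθ0 hτ hK0]
    _ ≤ (ε - rate C θ ε τ K) * a * s := by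
        gcongr ?_ * s
        exact mul_le_mul (by linarith) ha (weight_nonneg hτ hK0) (by linarith)

end Rate

/-- In the theorem `x = e m ²`, `y = e (m+1) ²`, `s = σ m`, `s' = σ (m+1)`, `a = a m`,
`b = a (m+1)` and `l = L (m+1)`. -/
lemma energy_step_le {x y s s' d a b ρ ε l : ℝ} (hρb : ρ * b ≤ (1 - ε) * a)
    (hbl : b * l ≤ 1) (hb : 0 ≤ b) (hs : 0 ≤ s) (hd : 0 ≤ d) (horth : x = d + y)
    (hcontr : s' ≤ ρ * s + l * d) : y + b * s' ≤ x + (1 - ε) * a * s := by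
  have hbs' : b * s' ≤ ρ * b * s + b * l * d := by
    nlinarith [mul_le_mul_of_nonneg_left hcontr hb]
  nlinarith [mul_le_mul_of_nonneg_right hρb hs, mul_le_mul_of_nonneg_right hbl hd]

end OfflineEnrichment

open OfflineEnrichment in
theorem stmt_10_general (C θ ρ ε : ℝ)
    (hC : 1 ≤ C) (hθ0 : 0 < θ) (hθ1 : θ < 1) (hρ0 : 0 < ρ)
    (hε0 : 0 < ε) (hε1 : ε < 1 - ρ)
    (L : ℕ → ℝ) (hLmono : ∀ m n, m ≤ n → L n ≤ L m) (hL0 : ∀ m, 0 ≤ L m)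
    (hL1 : 1 ≤ L 1)
    (τ : ℝ) (hτ0 : 0 < τ) (hτ : τ ≤ (1 - ρ - ε) / (ρ * L 1))
    (e σ d : ℕ → ℝ)
    (hσ : ∀ m, 0 ≤ σ m) (hd : ∀ m, 0 ≤ d m)
    (horth : ∀ m, 1 ≤ m → (e m) ^ 2 = d m + (e (m + 1)) ^ 2)
    (hcontr : ∀ m, 1 ≤ m → σ (m + 1) ≤ ρ * σ m + L (m + 1) * d m)
    (hrel : ∀ m, 1 ≤ m → (e m) ^ 2 ≤ (C / θ) * σ m) :
    (0 < 1 - ε * θ * τ / (2 * C * (1 + τ * L 1)) ∧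
        1 - ε * θ * τ / (2 * C * (1 + τ * L 1)) < 1) ∧
      ∀ m, 1 ≤ m →
        (e (m + 1)) ^ 2 + (τ / (1 + τ * L (m + 1))) * σ (m + 1)
          ≤ (1 - ε * θ * τ / (2 * C * (1 + τ * L 1))) *
              ((e m) ^ 2 + (τ / (1 + τ * L m)) * σ m) := by
  have hC0 : 0 < C := one_pos.trans_le hC
  have hδ0 := rate_pos hC0 hθ0 hε0 hτ0 (hL0 1)
  have hδε := rate_le_half hC hθ1.le hε0.le hτ0.le hL1
  unfold rate at hδ0 hδε
  refine ⟨⟨by linarith, by linarith⟩, fun m hm => ?_⟩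
  show e (m + 1) ^ 2 + weight τ (L (m + 1)) * σ (m + 1)
    ≤ (1 - rate C θ ε τ (L 1)) * (e m ^ 2 + weight τ (L m) * σ m)
  have hg : weight τ (L 1) ≤ weight τ (L m) := weight_antitone hτ0.le (hL0 m) (hLmono 1 m hm)
  have hρb : ρ * weight τ (L (m + 1)) ≤ (1 - ε) * weight τ (L m) :=
    calc ρ * weight τ (L (m + 1)) ≤ ρ * τ := by gcongr; exact weight_le_self hτ0.le (hL0 _)
      _ ≤ (1 - ε) * weight τ (L 1) := mul_le_one_sub_mul_weight hτ0.le (hL0 1)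
          ((le_div_iff₀ (mul_pos hρ0 (one_pos.trans_le hL1))).mp hτ)
      _ ≤ (1 - ε) * weight τ (L m) := by gcongr; linarith
  have hstep := energy_step_le hρb (weight_mul_le_one hτ0.le (hL0 _))
    (weight_nonneg hτ0.le (hL0 _)) (hσ m) (hd m) (horth m hm) (hcontr m hm)
  have habsorb :=
    rate_mul_le_of_reliable hC hθ0 hθ1.le hε0.le hτ0.le hL1 (hσ m) hg (hrel m hm)
  linarith

/-- Theorem 3.1 of the paper (convergence of the offline adaptive enrichment
algorithm) in sequence form: under Galerkin orthogonality (i), residual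
contraction (ii) and the a-posteriori reliability bound (iii), the quantity
`(e m)² + (τ/(1 + τ L m)) σ m` contracts with rate
`ε_off = 1 − εθτ/(2C(1 + τ L 1)) ∈ (0,1)`. -/
theorem stmt_10 (C θ ρ ε : ℝ)
    (hC : 1 ≤ C) (hθ0 : 0 < θ) (hθ1 : θ < 1) (hρ0 : 0 < ρ) (hρ1 : ρ < 1)
    (hε0 : 0 < ε) (hε1 : ε < 1 - ρ)
    (L : ℕ → ℝ) (hLmono : ∀ m n, m ≤ n → L n ≤ L m) (hL0 : ∀ m, 0 ≤ L m)
    (hL1 : 1 ≤ L 1)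
    (τ : ℝ) (hτ0 : 0 < τ) (hτ : τ ≤ (1 - ρ - ε) / (ρ * L 1))
    (e σ d : ℕ → ℝ)
    (he : ∀ m, 0 ≤ e m) (hσ : ∀ m, 0 ≤ σ m) (hd : ∀ m, 0 ≤ d m)
    (horth : ∀ m, 1 ≤ m → (e m) ^ 2 = d m + (e (m + 1)) ^ 2)
    (hcontr : ∀ m, 1 ≤ m → σ (m + 1) ≤ ρ * σ m + L (m + 1) * d m)
    (hrel : ∀ m, 1 ≤ m → (e m) ^ 2 ≤ (C / θ) * σ m) :
    (0 < 1 - ε * θ * τ / (2 * C * (1 + τ * L 1)) ∧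
        1 - ε * θ * τ / (2 * C * (1 + τ * L 1)) < 1) ∧
      ∀ m, 1 ≤ m →
        (e (m + 1)) ^ 2 + (τ / (1 + τ * L (m + 1))) * σ (m + 1)
          ≤ (1 - ε * θ * τ / (2 * C * (1 + τ * L 1))) *
              ((e m) ^ 2 + (τ / (1 + τ * L m)) * σ m) :=
  stmt_10_general C θ ρ ε hC hθ0 hθ1 hρ0 hε0 hε1 L hLmono hL0 hL1 τ hτ0 hτ e σ d hσ hd horth hcontr
    hrel
end

section
/- Let N be a positive natural number, let I be a nonempty subset of Fin N, let R : Fin N → ℝ with R i ≥ 0 for all i, let λ : Fin N → ℝ with λ i > 0 for all i, let C > 0, and let e, e' ≥ 0 be real numbers. Assume (i) e'² ≤ e² − ∑_{i ∈ I} (R i)², (ii) e² ≤ C · ∑_{i} (R i)²/(λ i), and (iii) ∑_{i} (R i)²/(λ i) > 0. Let Λ_min = min_{i ∈ I} λ i. Then e'² ≤ (1 − (Λ_min/C) · (∑_{i ∈ I} (R i)²/(λ i)) / (∑_{i} (R i)²/(λ i))) · e². -/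
/-! The added online basis functions remove `∑_{i ∈ I} R_i²` from the squared error. Since
`λ_i ≥ Λ_min` on `I`, this is at least `Λ_min ∑_{i ∈ I} R_i²/λ_i`, and by the a-posteriori
bound `e² ≤ C ∑_i R_i²/λ_i` that is in turn at least the stated fraction of `e²`. -/

theorem Finset.mul_sum_div_le_sum {ι : Type*} (s : Finset ι) {m : ℝ} {a w : ι → ℝ}
    (hm : ∀ i ∈ s, m ≤ w i) (hw : ∀ i ∈ s, 0 < w i) (ha : ∀ i ∈ s, 0 ≤ a i) :
    m * ∑ i ∈ s, a i / w i ≤ ∑ i ∈ s, a i := by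
  rw [Finset.mul_sum]
  refine Finset.sum_le_sum fun i hi => ?_
  calc m * (a i / w i) ≤ w i * (a i / w i) :=
        mul_le_mul_of_nonneg_right (hm i hi) (div_nonneg (ha i hi) (hw i hi).le)
    _ = a i := mul_div_cancel₀ _ (hw i hi).ne'

theorem le_one_sub_mul_of_le_sub {x y d C S Λ T : ℝ} (hy : y ≤ x - d) (hx : x ≤ C * S)
    (hd : Λ * T ≤ d) (hC : 0 < C) (hS : 0 < S) (hΛ : 0 ≤ Λ) (hT : 0 ≤ T) :
    y ≤ (1 - Λ / C * T / S) * x := by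
  have hcoef : 0 ≤ Λ / C * T / S := by positivity
  have hreduction : Λ / C * T / S * x ≤ d :=
    calc Λ / C * T / S * x ≤ Λ / C * T / S * (C * S) := mul_le_mul_of_nonneg_left hx hcoef
      _ = Λ * T := by field_simp
      _ ≤ d := hd
  linarith

theorem stmt_11_general (N : ℕ) (I : Finset (Fin N)) (hI : I.Nonempty)
    (R : Fin N → ℝ)
    (lam : Fin N → ℝ) (hlam : ∀ i, 0 < lam i)
    (C : ℝ) (hC : 0 < C)
    (e e' : ℝ)
    (h1 : e' ^ 2 ≤ e ^ 2 - ∑ i ∈ I, (R i) ^ 2)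
    (h2 : e ^ 2 ≤ C * ∑ i, (R i) ^ 2 / lam i)
    (h3 : 0 < ∑ i, (R i) ^ 2 / lam i) :
    e' ^ 2
      ≤ (1 - (I.inf' hI lam / C) *
            (∑ i ∈ I, (R i) ^ 2 / lam i) / (∑ i, (R i) ^ 2 / lam i)) * e ^ 2 := by
  have hΛ : 0 < I.inf' hI lam := (Finset.lt_inf'_iff hI).2 fun i _ => hlam i
  have hdecrease : I.inf' hI lam * ∑ i ∈ I, (R i) ^ 2 / lam i ≤ ∑ i ∈ I, (R i) ^ 2 :=
    I.mul_sum_div_le_sum (fun i hi => I.inf'_le lam hi) (fun i _ => hlam i)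
      (fun i _ => sq_nonneg (R i))
  exact le_one_sub_mul_of_le_sub h1 h2 hdecrease hC h3 hΛ.le
    (Finset.sum_nonneg fun i _ => div_nonneg (sq_nonneg (R i)) (hlam i).le)

/-- Theorem 4.1 of the paper (convergence of the online adaptive enrichment
algorithm) in abstract form: if the squared error drops by `∑_{i ∈ I} (R i)²`
and satisfies the a-posteriori bound `e² ≤ C ∑ i, (R i)²/(λ i)`, then with
`Λ_min = min_{i ∈ I} λ i`,
`e'² ≤ (1 − (Λ_min/C) (∑_{i ∈ I} (R i)²/(λ i))/(∑ i, (R i)²/(λ i))) e²`. -/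
theorem stmt_11 (N : ℕ) (hN : 0 < N) (I : Finset (Fin N)) (hI : I.Nonempty)
    (R : Fin N → ℝ) (hR : ∀ i, 0 ≤ R i)
    (lam : Fin N → ℝ) (hlam : ∀ i, 0 < lam i)
    (C : ℝ) (hC : 0 < C)
    (e e' : ℝ) (he : 0 ≤ e) (he' : 0 ≤ e')
    (h1 : e' ^ 2 ≤ e ^ 2 - ∑ i ∈ I, (R i) ^ 2)
    (h2 : e ^ 2 ≤ C * ∑ i, (R i) ^ 2 / lam i)
    (h3 : 0 < ∑ i, (R i) ^ 2 / lam i) :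
    e' ^ 2
      ≤ (1 - (I.inf' hI lam / C) *
            (∑ i ∈ I, (R i) ^ 2 / lam i) / (∑ i, (R i) ^ 2 / lam i)) * e ^ 2 :=
  stmt_11_general N I hI R lam hlam C hC e e' h1 h2 h3
end
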